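/- Let N ≥ 1, τ>0, and let f : [0,∞) → [0,∞) be a C² function with f(0)=0, f(1)=1, f'(0)>1, f'(1)<1, f'(u)>0 for all u∈(0,1), and f(u)>u for all u∈(0,1). Let c*>0 be the minimal monostable wave speed, and let φ : [−τ,0]×ℝ^N → [0,1] satisfy the Assumption on the initial datum, with Ω₀ := {x : w₀(x)>0}. For c>0 and t ≥ 0 set Ω_t^c := Ω₀ ∪ {x∈ℝ^N : dist(x,Ω₀) < ct}. Then for every c > c*, every t₀>0 and every ρ>0 there exists ε₀∈(0,1) such that for all ε∈(0,ε₀): every solution u^ε of the scaled delayed reaction–diffusion equation with initial datum φ satisfies u^ε(t,x) ≤ ρ for all t ≥ t₀ and all x ∈ ℝ^N \\ Ω_t^c. -/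

import Mathlib

/-!
Comparison with a planar travelling wave of the minimal speed `c*`. Let `ρ₀ < 1` be the maximum
of `v₀`. For `x` at distance at least `c t` from the convex set `Ω₀`, take the unit normal `ν` of a
supporting half-space of `Ω₀` at distance `dist(x, Ω₀)` from `x`. The planar wave
`U((⟨ν, y⟩ - a - c* t) / ε)`, with `a` chosen so that it exceeds `ρ₀` on `Ω₀` during the initial
delay window, lies above the initial datum, which vanishes outside `Ω₀`. A comparison principle,
proved by the method of steps on delay windows of length `ετ` using the monotonicity of `f` and a
minimum principle for the exponentially weighted difference, keeps it above `u^ε` for all times.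
At `(t, x)` the argument of the wave is at least `((c - c*) t₀ - O(ε)) / ε → +∞`, so
`u^ε(t, x) ≤ ρ` once `ε` is small.
-/

open Set Filter Metric
open scoped Topology BigOperators

/-- The Laplacian of a function on `ℝ^N`, as a sum of pure second derivatives. -/
noncomputable def lap {N : ℕ} (g : EuclideanSpace ℝ (Fin N) → ℝ)
    (x : EuclideanSpace ℝ (Fin N)) : ℝ :=
  ∑ i : Fin N, iteratedFDeriv ℝ 2 g x ![EuclideanSpace.single i 1, EuclideanSpace.single i 1]
/-- `f : [0,∞) → [0,∞)` is a monostable nonlinearity of class `C²`: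
`f(0)=0`, `f(1)=1`, `f'(0)>1`, `f'(1)<1`, `f'>0` on `(0,1)` and `f(u)>u` on `(0,1)`. -/
structure Monostable (f : ℝ → ℝ) : Prop where
  smooth : ContDiffOn ℝ 2 f (Ici 0)
  nonneg : ∀ u, 0 ≤ u → 0 ≤ f u
  map0 : f 0 = 0
  map1 : f 1 = 1
  slope0 : 1 < derivWithin f (Ici 0) 0
  slope1 : derivWithin f (Ici 0) 1 < 1
  derivPos : ∀ u ∈ Ioo (0:ℝ) 1, 0 < derivWithin f (Ici 0) u
  aboveId : ∀ u ∈ Ioo (0:ℝ) 1, u < f u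
/-- A monostable delayed travelling wave of speed `c` for the nonlinearity `f`:
a `C²` profile with values in `[0,1]`, `U'' + cU' + f(U(·+cτ)) − U = 0`,
`U(−∞)=1`, `U(+∞)=0`. -/
def MonoWave (f : ℝ → ℝ) (τ : ℝ) (U : ℝ → ℝ) (c : ℝ) : Prop :=
  ContDiff ℝ 2 U ∧ (∀ z, U z ∈ Icc (0:ℝ) 1) ∧
    (∀ z, deriv (deriv U) z + c * deriv U z + f (U (z + c * τ)) - U z = 0) ∧
    Tendsto U atBot (𝓝 1) ∧ Tendsto U atTop (𝓝 0)
/-- `u` is a solution of the scaled delayed reaction–diffusion equation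
`∂_t u = εΔu + (1/ε)[f(u(t−ετ,x)) − u(t,x)]` on `(0,∞)×ℝ^N`, with values in
`[0,1]`, continuous on `[−ετ,∞)×ℝ^N`, equal to `φ(·/ε,·)` on `[−ετ,0]×ℝ^N`,
`C¹` in `t` and `C²` in `x` for `t > 0`. -/
def IsRDSol {N : ℕ} (f : ℝ → ℝ) (τ ε : ℝ)
    (φ u : ℝ → EuclideanSpace ℝ (Fin N) → ℝ) : Prop :=
  ContinuousOn (fun p : ℝ × EuclideanSpace ℝ (Fin N) => u p.1 p.2)
      (Ici (-(ε * τ)) ×ˢ univ) ∧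
    (∀ t ≥ -(ε * τ), ∀ x, u t x ∈ Icc (0:ℝ) 1) ∧
    (∀ θ ∈ Icc (-(ε * τ)) 0, ∀ x, u θ x = φ (θ / ε) x) ∧
    (∀ t > (0:ℝ), (∀ x, DifferentiableAt ℝ (fun s => u s x) t) ∧ ContDiff ℝ 2 (u t)) ∧
    (∀ t > (0:ℝ), ∀ x, deriv (fun s => u s x) t
      = ε * lap (u t) x + (1 / ε) * (f (u (t - ε * τ) x) - u t x))

/-- A negative second derivative would make `a` also a local maximum, so `h` would be locally
constant. -/
theorem IsLocalMin.deriv_deriv_nonneg {h : ℝ → ℝ} {a : ℝ} (hmin : IsLocalMin h a)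
    (hc : ContinuousAt h a) : 0 ≤ deriv (deriv h) a := by
  by_contra! hneg
  have hconst : h =ᶠ[𝓝 a] fun _ => h a :=
    ((isLocalMax_of_deriv_deriv_neg hneg hmin.deriv_eq_zero hc).and hmin).mono
      fun y hy => le_antisymm hy.1 hy.2
  rw [hconst.deriv.deriv_eq, deriv_const', deriv_const] at hneg
  exact hneg.false

theorem neg_two_mul_le_deriv_deriv_of_forall_le_add_sq {h : ℝ → ℝ} (hh : ContDiff ℝ 2 h) {β b : ℝ}
    (hmin : ∀ s, h 0 ≤ h s + β * (b * s + s ^ 2)) : -(2 * β) ≤ deriv (deriv h) 0 := by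
  set k : ℝ → ℝ := fun s => h s + β * (b * s + s ^ 2)
  have hk : IsLocalMin k 0 := Eventually.of_forall fun s => by simpa [k] using hmin s
  have hquad (s : ℝ) : HasDerivAt (fun s : ℝ => β * (b * s + s ^ 2)) (β * (b + 2 * s)) s := by
    simpa using (((hasDerivAt_id s).const_mul b).add (hasDerivAt_pow 2 s)).const_mul β
  have hderiv : deriv k = fun s => deriv h s + β * (b + 2 * s) := funext fun s =>
    ((hh.differentiable (by norm_num) s).hasDerivAt.add (hquad s)).deriv
  have hderiv2 : HasDerivAt (deriv k) (deriv (deriv h) 0 + 2 * β) 0 := by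
    have hlin : HasDerivAt (fun s : ℝ => β * (b + 2 * s)) (2 * β) 0 := by
      simpa [mul_comm] using (((hasDerivAt_id (0:ℝ)).const_mul 2).const_add b).const_mul β
    rw [hderiv]
    exact (hh.differentiable_deriv_two 0).hasDerivAt.fun_add hlin
  have := hk.deriv_deriv_nonneg (hh.continuous.add (by fun_prop)).continuousAt
  rw [hderiv2.deriv] at this
  linarith

theorem deriv_nonpos_of_forall_Icc_le {ϕ : ℝ → ℝ} {T₀ T : ℝ} (hT : T₀ < T)
    (hϕ : DifferentiableAt ℝ ϕ T) (hmin : ∀ t ∈ Icc T₀ T, ϕ T ≤ ϕ t) : deriv ϕ T ≤ 0 := by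
  have hcone : T₀ - T ∈ posTangentConeAt (Icc T₀ T) T :=
    sub_mem_posTangentConeAt_of_segment_subset
      ((convex_Icc T₀ T).segment_subset (right_mem_Icc.2 hT.le) (left_mem_Icc.2 hT.le))
  have := (IsMinOn.localize (f := ϕ) hmin).hasFDerivWithinAt_nonneg
    hϕ.hasFDerivAt.hasFDerivWithinAt hcone
  simp only [fderiv_eq_smul_deriv, smul_eq_mul] at this
  nlinarith

theorem deriv_deriv_comp_add_mul {U : ℝ → ℝ} (hU : ContDiff ℝ 2 U) (ζ α : ℝ) :
    deriv (deriv fun s => U (ζ + α * s)) 0 = α ^ 2 * deriv (deriv U) ζ := by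
  have hline {V : ℝ → ℝ} (hV : Differentiable ℝ V) (s : ℝ) :
      HasDerivAt (fun s => V (ζ + α * s)) (deriv V (ζ + α * s) * α) s := by
    have hpath : HasDerivAt (fun s => ζ + α * s) α s := by
      simpa using ((hasDerivAt_id s).const_mul α).const_add ζ
    exact (hV _).hasDerivAt.comp s hpath
  rw [funext (hline (hU.differentiable (by norm_num)) · |>.deriv),
    ((hline hU.differentiable_deriv_two 0).mul_const α).deriv]
  simp only [mul_zero, add_zero]
  ring

open Laplacian InnerProductSpace

theorem lap_eq_laplacian {N : ℕ} (g : EuclideanSpace ℝ (Fin N) → ℝ) : lap g = Δ g := by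
  rw [laplacian_eq_iteratedFDeriv_orthonormalBasis g (EuclideanSpace.basisFun (Fin N) ℝ)]
  funext x
  simp [lap]

theorem lap_const_mul_sub {N : ℕ} {F G : EuclideanSpace ℝ (Fin N) → ℝ} (A : ℝ)
    (hF : ContDiff ℝ 2 F) (hG : ContDiff ℝ 2 G) (x : EuclideanSpace ℝ (Fin N)) :
    lap (fun y => A * (F y - G y)) x = A * (lap F x - lap G x) := by
  simp only [lap_eq_laplacian]
  rw [← hF.contDiffAt.laplacian_sub hG.contDiffAt, ← smul_eq_mul]
  exact laplacian_smul A (hF.sub hG).contDiffAt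

theorem iteratedFDeriv_two_apply_eq_deriv_deriv {E F : Type*} [NormedAddCommGroup E]
    [NormedSpace ℝ E] [NormedAddCommGroup F] [NormedSpace ℝ F] {g : E → F}
    (hg : ContDiff ℝ 2 g) (x v : E) :
    iteratedFDeriv ℝ 2 g x ![v, v] = deriv (deriv fun s : ℝ => g (x + s • v)) 0 := by
  have hline : deriv (fun s : ℝ => g (x + s • v))
      = fun s => iteratedFDeriv ℝ 1 g (x + s • v) (fun _ => v) := by
    funext s
    rw [(hg.differentiable (by norm_num) _).deriv_comp_add_smul, iteratedFDeriv_one_apply]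
  rw [hline, ContDiffAt.deriv_fderiv_add_smul (n := 1) hg.contDiffAt, zero_smul, add_zero]
  congr 1
  funext i
  fin_cases i <;> rfl

theorem neg_two_mul_le_lap_of_forall_le_add_sq {N : ℕ} {g : EuclideanSpace ℝ (Fin N) → ℝ}
    (hg : ContDiff ℝ 2 g) {x z : EuclideanSpace ℝ (Fin N)} {β : ℝ}
    (hmin : ∀ y, g x + β * ‖x - z‖ ^ 2 ≤ g y + β * ‖y - z‖ ^ 2) :
    -(2 * β * N) ≤ lap g x := by
  have hline (i : Fin N) : -(2 * β) ≤ iteratedFDeriv ℝ 2 g x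
      ![EuclideanSpace.single i 1, EuclideanSpace.single i 1] := by
    set e : EuclideanSpace ℝ (Fin N) := EuclideanSpace.single i 1
    have he : ‖e‖ = 1 := by simp [e]
    rw [iteratedFDeriv_two_apply_eq_deriv_deriv hg]
    refine neg_two_mul_le_deriv_deriv_of_forall_le_add_sq (hg.comp (by fun_prop))
      (b := 2 * inner ℝ (x - z) e) fun s => ?_
    have hsq : ‖x + s • e - z‖ ^ 2 = ‖x - z‖ ^ 2 + (2 * inner ℝ (x - z) e * s + s ^ 2) := by
      rw [show x + s • e - z = (x - z) + s • e by abel, norm_add_sq_real, real_inner_smul_right,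
        norm_smul, he, Real.norm_eq_abs, mul_one, sq_abs]
      ring
    have := hmin (x + s • e)
    rw [hsq, mul_add] at this
    simp only [Function.comp_apply, zero_smul, add_zero]
    linarith
  calc -(2 * β * N) = ∑ _i : Fin N, -(2 * β) := by simp; ring
    _ ≤ lap g x := Finset.sum_le_sum fun i _ => hline i

theorem lap_comp_inner_add {N : ℕ} {U : ℝ → ℝ} (hU : ContDiff ℝ 2 U)
    (w : EuclideanSpace ℝ (Fin N)) (b : ℝ) (x : EuclideanSpace ℝ (Fin N)) :
    lap (fun y => U (inner ℝ w y + b)) x = ‖w‖ ^ 2 * deriv (deriv U) (inner ℝ w x + b) := by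
  have hg : ContDiff ℝ 2 fun y => U (inner ℝ w y + b) :=
    hU.comp ((contDiff_const.inner ℝ contDiff_id).add contDiff_const)
  have hslice (i : Fin N) : iteratedFDeriv ℝ 2 (fun y => U (inner ℝ w y + b)) x
      ![EuclideanSpace.single i 1, EuclideanSpace.single i 1]
      = inner ℝ w (EuclideanSpace.single i (1:ℝ)) ^ 2 * deriv (deriv U) (inner ℝ w x + b) := by
    rw [iteratedFDeriv_two_apply_eq_deriv_deriv hg, ← deriv_deriv_comp_add_mul hU]
    congr! 4 with s
    rw [inner_add_right, real_inner_smul_right]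
    ring
  simp only [lap, hslice, ← Finset.sum_mul]
  congr 1
  simp [EuclideanSpace.norm_sq_eq, EuclideanSpace.inner_single_right]

theorem ContinuousOn.exists_isMinOn_neg {X : Type*} [TopologicalSpace X] {s K : Set X}
    {Z : X → ℝ} (hZ : ContinuousOn Z s) (hs : IsClosed s) (hK : IsCompact K) {x₀ : X}
    (hx₀ : x₀ ∈ s) (hneg : Z x₀ < 0) (hoff : ∀ p ∈ s, p ∉ K → 0 ≤ Z p) :
    ∃ p ∈ s, Z p < 0 ∧ IsMinOn Z s p := by
  obtain ⟨p, hp, hmin⟩ := hZ.exists_isMinOn' hs hx₀ <| eventually_inf_principal.2 <|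
    mem_of_superset hK.compl_mem_cocompact fun q hqK hqs => hneg.le.trans (hoff q hqs hqK)
  exact ⟨p, hp, (hmin hx₀).trans_lt hneg, hmin⟩

theorem deriv_le_and_le_lap_of_penalized_min {N : ℕ} {H : ℝ → EuclideanSpace ℝ (Fin N) → ℝ}
    {T₀ ts β η : ℝ} {xs z : EuclideanSpace ℝ (Fin N)} (hts : T₀ < ts)
    (hdiff : DifferentiableAt ℝ (fun s => H s xs) ts) (hC2 : ContDiff ℝ 2 (H ts))
    (hmin : ∀ t ∈ Icc T₀ ts, ∀ y,
      H ts xs + β * ‖xs - z‖ ^ 2 + η * ts ≤ H t y + β * ‖y - z‖ ^ 2 + η * t) :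
    deriv (fun s => H s xs) ts ≤ -η ∧ -(2 * β * N) ≤ lap (H ts) xs := by
  constructor
  · have hϕ : HasDerivAt (fun s => H s xs + η * s) (deriv (fun s => H s xs) ts + η) ts := by
      simpa using hdiff.hasDerivAt.fun_add ((hasDerivAt_id ts).const_mul η)
    have := deriv_nonpos_of_forall_Icc_le hts hϕ.differentiableAt fun t ht => by
      linarith [hmin t ht xs]
    rw [hϕ.deriv] at this
    linarith
  · exact neg_two_mul_le_lap_of_forall_le_add_sq hC2 fun y => by
      linarith [hmin ts (right_mem_Icc.2 hts.le) y]

theorem nonneg_of_heat_supersolution {N : ℕ} {ε T₀ T₁ C : ℝ} (hε : 0 < ε)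
    {H : ℝ → EuclideanSpace ℝ (Fin N) → ℝ}
    (hcont : ContinuousOn (fun p : ℝ × EuclideanSpace ℝ (Fin N) => H p.1 p.2)
      (Icc T₀ T₁ ×ˢ univ))
    (hbdd : ∀ t ∈ Icc T₀ T₁, ∀ x, -C ≤ H t x)
    (hreg : ∀ t ∈ Ioc T₀ T₁,
      (∀ x, DifferentiableAt ℝ (fun s => H s x) t) ∧ ContDiff ℝ 2 (H t))
    (hsuper : ∀ t ∈ Ioc T₀ T₁, ∀ x, ε * lap (H t) x ≤ deriv (fun s => H s x) t)
    (hinit : ∀ x, 0 ≤ H T₀ x) :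
    ∀ t ∈ Icc T₀ T₁, ∀ x, 0 ≤ H t x := by
  by_contra! ⟨th, hth, xh, hneg⟩
  have hC : 0 < C := by linarith [hbdd th hth xh]
  -- penalise by a small paraboloid in space and a small slope in time
  set η := -H th xh / (T₁ - T₀ + 1)
  set β := η / (2 * N * ε + 1)
  set R := √(C / β)
  have hη : 0 < η := div_pos (by linarith) (by linarith [hth.1, hth.2])
  have hηd : η * (th - T₀) < -H th xh := by
    calc η * (th - T₀) < η * (T₁ - T₀ + 1) := by nlinarith [hth.2]
      _ = -H th xh := div_mul_cancel₀ _ (by linarith [hth.1, hth.2])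
  have hβ : 0 < β := div_pos hη (by positivity)
  have hβη : 2 * N * ε * β < η := by
    rw [mul_div_assoc', div_lt_iff₀ (by positivity)]
    nlinarith
  have hR : β * R ^ 2 = C := by
    rw [Real.sq_sqrt (div_pos hC hβ).le, mul_div_cancel₀ _ hβ.ne']
  set Z : ℝ × EuclideanSpace ℝ (Fin N) → ℝ :=
    fun p => H p.1 p.2 + β * ‖p.2 - xh‖ ^ 2 + η * (p.1 - T₀)
  have hfar : ∀ p ∈ Icc T₀ T₁ ×ˢ univ, p ∉ Icc T₀ T₁ ×ˢ closedBall xh R → 0 ≤ Z p := by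
    rintro ⟨t, y⟩ ⟨ht, -⟩ hK
    have hy : R ≤ ‖y - xh‖ := by
      by_contra! h
      exact hK ⟨ht, mem_closedBall_iff_norm.2 h.le⟩
    have : β * R ^ 2 ≤ β * ‖y - xh‖ ^ 2 := by gcongr
    have : 0 ≤ η * (t - T₀) := mul_nonneg hη.le (by linarith [ht.1])
    linarith [hbdd t ht y]
  obtain ⟨⟨ts, xs⟩, ⟨hts, -⟩, hZs, hmin⟩ := ContinuousOn.exists_isMinOn_neg (Z := Z)
    ((hcont.add (by fun_prop)).add (by fun_prop)) (isClosed_Icc.prod isClosed_univ)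
    (isCompact_Icc.prod (isCompact_closedBall xh R)) (x₀ := (th, xh)) ⟨hth, trivial⟩
    (by simp only [Z, sub_self, norm_zero]; linarith) hfar
  have hts₀ : T₀ < ts := by
    refine lt_of_le_of_ne hts.1 fun h => hZs.not_ge ?_
    subst h
    have := hinit xs
    simp only [Z, sub_self, mul_zero, add_zero]
    positivity
  obtain ⟨hdiff, hC2⟩ := hreg ts ⟨hts₀, hts.2⟩
  obtain ⟨htime, hspace⟩ := deriv_le_and_le_lap_of_penalized_min (z := xh) (β := β) (η := η)
    hts₀ (hdiff xs) hC2 fun t ht y => by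
      have : Z (ts, xs) ≤ Z (t, y) := hmin ⟨⟨ht.1, ht.2.trans hts.2⟩, trivial⟩
      simp only [Z] at this
      linarith
  nlinarith [hsuper ts ⟨hts₀, hts.2⟩ xs]

structure IsRDSupersolution {N : ℕ} (f : ℝ → ℝ) (τ ε : ℝ)
    (W : ℝ → EuclideanSpace ℝ (Fin N) → ℝ) : Prop where
  continuous : Continuous fun p : ℝ × EuclideanSpace ℝ (Fin N) => W p.1 p.2
  mem_Icc : ∀ t x, W t x ∈ Icc (0:ℝ) 1
  differentiableAt : ∀ t x, DifferentiableAt ℝ (fun s => W s x) t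
  contDiff : ∀ t, ContDiff ℝ 2 (W t)
  le_deriv : ∀ t x,
    ε * lap (W t) x + (1 / ε) * (f (W (t - ε * τ) x) - W t x) ≤ deriv (fun s => W s x) t

section Comparison

variable {N : ℕ} {f : ℝ → ℝ} {τ ε : ℝ} {φ u W : ℝ → EuclideanSpace ℝ (Fin N) → ℝ}

/-- The weight `exp (t / ε)` absorbs the linear term `-(1/ε) (W - u)` of the equation. -/
theorem IsRDSupersolution.lap_le_deriv_exp_mul_sub (hW : IsRDSupersolution f τ ε W)
    (hu : IsRDSol f τ ε φ u) (hε : 0 < ε) (hf : MonotoneOn f (Icc 0 1)) {s : ℝ} (hs : 0 < s)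
    {y : EuclideanSpace ℝ (Fin N)} (hdelay : u (s - ε * τ) y ≤ W (s - ε * τ) y) :
    ε * lap (fun x => Real.exp (s / ε) * (W s x - u s x)) y
      ≤ deriv (fun r => Real.exp (r / ε) * (W r y - u r y)) s := by
  obtain ⟨-, hurange, -, hureg, hupde⟩ := hu
  have hexp : HasDerivAt (fun r => Real.exp (r / ε)) (Real.exp (s / ε) * (1 / ε)) s :=
    (Real.hasDerivAt_exp _).comp s ((hasDerivAt_id s).div_const ε)
  have hdiff := (hW.differentiableAt s y).hasDerivAt.fun_sub ((hureg s hs).1 y).hasDerivAt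
  rw [(hexp.fun_mul hdiff).deriv, lap_const_mul_sub _ (hW.contDiff s) (hureg s hs).2, hupde s hs y]
  have hf_delay : f (u (s - ε * τ) y) ≤ f (W (s - ε * τ) y) :=
    hf (hurange _ (by linarith) y) (hW.mem_Icc _ y) hdelay
  have hsuper := hW.le_deriv s y
  have hexp_pos := Real.exp_pos (s / ε)
  have hreaction :
      0 ≤ Real.exp (s / ε) * (1 / ε) * (f (W (s - ε * τ) y) - f (u (s - ε * τ) y)) :=
    mul_nonneg (by positivity) (sub_nonneg.2 hf_delay)
  nlinarith

theorem IsRDSol.le_on_next_delay_window (hu : IsRDSol f τ ε φ u)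
    (hW : IsRDSupersolution f τ ε W) (hε : 0 < ε) (hτ : 0 < τ) (hf : MonotoneOn f (Icc 0 1))
    {T₀ : ℝ} (hT₀ : 0 ≤ T₀) (hle : ∀ t ∈ Icc (-(ε * τ)) T₀, ∀ x, u t x ≤ W t x) :
    ∀ t ∈ Icc T₀ (T₀ + ε * τ), ∀ x, u t x ≤ W t x := by
  obtain ⟨hucont, hurange, -, hureg, -⟩ := id hu
  set T₁ := T₀ + ε * τ
  set H : ℝ → EuclideanSpace ℝ (Fin N) → ℝ := fun s y => Real.exp (s / ε) * (W s y - u s y)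
  have hcont : ContinuousOn (fun p : ℝ × EuclideanSpace ℝ (Fin N) => H p.1 p.2)
      (Icc T₀ T₁ ×ˢ univ) := by
    refine (by fun_prop : Continuous fun p : ℝ × _ => Real.exp (p.1 / ε)).continuousOn.mul
      (hW.continuous.continuousOn.sub (hucont.mono (prod_mono_left fun s hs => ?_)))
    exact (neg_nonpos.2 (mul_pos hε hτ).le).trans (hT₀.trans hs.1)
  have hbdd : ∀ s ∈ Icc T₀ T₁, ∀ y, -Real.exp (T₁ / ε) ≤ H s y := by
    intro s hs y
    have hWu : -1 ≤ W s y - u s y := by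
      linarith [(hW.mem_Icc s y).1, (hurange s (by nlinarith [hs.1]) y).2]
    have hexp : Real.exp (s / ε) ≤ Real.exp (T₁ / ε) := by gcongr; exact hs.2
    nlinarith [Real.exp_pos (s / ε)]
  have hreg : ∀ s ∈ Ioc T₀ T₁,
      (∀ y, DifferentiableAt ℝ (fun r => H r y) s) ∧ ContDiff ℝ 2 (H s) := by
    intro s hs
    obtain ⟨hudiff, huC2⟩ := hureg s (hT₀.trans_lt hs.1)
    have hexp : Differentiable ℝ fun r => Real.exp (r / ε) := by fun_prop
    exact ⟨fun y => (hexp s).mul ((hW.differentiableAt s y).sub (hudiff y)),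
      contDiff_const.mul ((hW.contDiff s).sub huC2)⟩
  have hsuper : ∀ s ∈ Ioc T₀ T₁, ∀ y, ε * lap (H s) y ≤ deriv (fun r => H r y) s :=
    fun s hs y => hW.lap_le_deriv_exp_mul_sub hu hε hf (hT₀.trans_lt hs.1)
      (hle _ ⟨by linarith [hs.1], by linarith [hs.2]⟩ y)
  have hinit : ∀ y, 0 ≤ H T₀ y := fun y =>
    mul_nonneg (Real.exp_pos _).le (sub_nonneg.2 (hle T₀ ⟨by nlinarith, le_rfl⟩ y))
  intro t ht x
  have := nonneg_of_heat_supersolution hε hcont hbdd hreg hsuper hinit t ht x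
  exact sub_nonneg.1 ((mul_nonneg_iff_of_pos_left (Real.exp_pos (t / ε))).1 this)

theorem IsRDSol.le_of_le_initial (hu : IsRDSol f τ ε φ u) (hW : IsRDSupersolution f τ ε W)
    (hε : 0 < ε) (hτ : 0 < τ) (hf : MonotoneOn f (Icc 0 1))
    (hinit : ∀ θ ∈ Icc (-(ε * τ)) 0, ∀ x, u θ x ≤ W θ x) :
    ∀ t ≥ -(ε * τ), ∀ x, u t x ≤ W t x := by
  have hετ : 0 < ε * τ := mul_pos hε hτ
  have hsteps (k : ℕ) : ∀ t ∈ Icc (-(ε * τ)) (k * (ε * τ)), ∀ x, u t x ≤ W t x := by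
    induction k with
    | zero => simpa using hinit
    | succ k ih =>
      intro t ht x
      rcases le_or_gt t (k * (ε * τ)) with htk | htk
      · exact ih t ⟨ht.1, htk⟩ x
      · refine hu.le_on_next_delay_window hW hε hτ hf (by positivity) ih t ⟨htk.le, ?_⟩ x
        linarith [ht.2, show ((k + 1 : ℕ) : ℝ) * (ε * τ) = k * (ε * τ) + ε * τ by push_cast; ring]
  intro t ht x
  obtain ⟨k, hk⟩ := exists_nat_ge (t / (ε * τ))
  exact hsteps k t ⟨ht, (div_le_iff₀ hετ).1 hk⟩ x

end Comparison

noncomputable def planarWave {N : ℕ} (U : ℝ → ℝ) (ν : EuclideanSpace ℝ (Fin N)) (a c ε : ℝ) :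
    ℝ → EuclideanSpace ℝ (Fin N) → ℝ :=
  fun t y => U ((inner ℝ ν y - a - c * t) / ε)

theorem planarWave_isRDSupersolution {N : ℕ} {f : ℝ → ℝ} {τ c ε : ℝ} {U : ℝ → ℝ}
    (hU : MonoWave f τ U c) (hε : 0 < ε) {ν : EuclideanSpace ℝ (Fin N)} (hν : ‖ν‖ = 1)
    (a : ℝ) : IsRDSupersolution f τ ε (planarWave U ν a c ε) := by
  obtain ⟨hC2, hrange, hode, -, -⟩ := hU
  have harg (t : ℝ) (y : EuclideanSpace ℝ (Fin N)) :
      inner ℝ (ε⁻¹ • ν) y + -((a + c * t) / ε) = (inner ℝ ν y - a - c * t) / ε := by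
    rw [real_inner_smul_left]
    ring
  have hfun (t : ℝ) : planarWave U ν a c ε t
      = fun y => U (inner ℝ (ε⁻¹ • ν) y + -((a + c * t) / ε)) := by
    funext y
    rw [harg]
    rfl
  have hnorm : ‖ε⁻¹ • ν‖ ^ 2 = 1 / ε ^ 2 := by
    rw [norm_smul, hν, norm_inv, Real.norm_of_nonneg hε.le]
    field_simp
  have htime (t : ℝ) (y : EuclideanSpace ℝ (Fin N)) :
      HasDerivAt (fun s => planarWave U ν a c ε s y)
        (deriv U ((inner ℝ ν y - a - c * t) / ε) * (-c / ε)) t := by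
    have hpath : HasDerivAt (fun s => (inner ℝ ν y - a - c * s) / ε) (-c / ε) t := by
      simpa [neg_div] using
        (((hasDerivAt_id t).const_mul c).const_sub (inner ℝ ν y - a)).div_const ε
    exact (hC2.differentiable (by norm_num) _).hasDerivAt.comp t hpath
  refine ⟨?_, fun t y => hrange _, fun t y => (htime t y).differentiableAt,
    fun t => hfun t ▸ hC2.comp ((contDiff_const.inner ℝ contDiff_id).add contDiff_const),
    fun t y => le_of_eq ?_⟩
  · exact hC2.continuous.comp (by fun_prop)
  rw [(htime t y).deriv]
  set ζ := (inner ℝ ν y - a - c * t) / ε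
  have hlap : lap (planarWave U ν a c ε t) y = deriv (deriv U) ζ / ε ^ 2 := by
    rw [hfun t, lap_comp_inner_add hC2, hnorm, harg]
    ring
  have hnow : planarWave U ν a c ε t y = U ζ := rfl
  have hdelay : planarWave U ν a c ε (t - ε * τ) y = U (ζ + c * τ) := by
    simp only [planarWave, ζ]
    congr 1
    field_simp
    ring
  rw [hlap, hnow, hdelay]
  field_simp
  linear_combination hode ζ

theorem Monostable.monotoneOn {f : ℝ → ℝ} (hf : Monostable f) : MonotoneOn f (Icc 0 1) := by
  refine (strictMonoOn_of_deriv_pos (convex_Icc 0 1)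
    (hf.smooth.continuousOn.mono Icc_subset_Ici_self) fun x hx => ?_).monotoneOn
  rw [interior_Icc] at hx
  rw [← derivWithin_of_mem_nhds (Ici_mem_nhds hx.1)]
  exact hf.derivPos x hx

theorem Convex.exists_inner_add_infDist_le {E : Type*} [NormedAddCommGroup E]
    [InnerProductSpace ℝ E] [CompleteSpace E] {Ω : Set E} (hΩ : Convex ℝ Ω) {x : E}
    (hx : 0 < infDist x Ω) :
    ∃ ν : E, ‖ν‖ = 1 ∧ ∀ y ∈ closure Ω, inner ℝ ν y + infDist x Ω ≤ inner ℝ ν x := by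
  have hne : (closure Ω).Nonempty := by
    by_contra! h
    rw [closure_empty_iff] at h
    simp [h] at hx
  obtain ⟨p, hp, hpmin⟩ :=
    exists_norm_eq_iInf_of_complete_convex hne isClosed_closure.isComplete hΩ.closure x
  have hdist : ‖x - p‖ = infDist x Ω := by
    rw [← infDist_closure, infDist_eq_iInf]
    simpa only [dist_eq_norm] using hpmin
  have hr : 0 < ‖x - p‖ := hdist ▸ hx
  refine ⟨‖x - p‖⁻¹ • (x - p), norm_smul_inv_norm (norm_pos_iff.1 hr), fun y hy => ?_⟩
  have hobtuse := (norm_eq_iInf_iff_real_inner_le_zero hΩ.closure hp).1 hpmin y hy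
  have hgap : ‖x - p‖ ^ 2 ≤ inner ℝ (x - p) x - inner ℝ (x - p) y := by
    have : inner ℝ (x - p) x - inner ℝ (x - p) y = ‖x - p‖ ^ 2 - inner ℝ (x - p) (y - p) := by
      rw [← real_inner_self_eq_norm_sq, ← inner_sub_right, ← inner_sub_right,
        show x - p - (y - p) = x - y by abel]
    linarith
  rw [real_inner_smul_left, real_inner_smul_left, ← hdist, inv_mul_eq_div, inv_mul_eq_div,
    div_add' _ _ _ hr.ne', div_le_div_iff_of_pos_right hr]
  nlinarith

theorem IsRDSol.le_wave_of_halfSpace {N : ℕ} {f : ℝ → ℝ} {τ ε c ρ₀ A L : ℝ}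
    {φ u : ℝ → EuclideanSpace ℝ (Fin N) → ℝ} {U : ℝ → ℝ} (hu : IsRDSol f τ ε φ u)
    (hε : 0 < ε) (hτ : 0 < τ) (hf : MonotoneOn f (Icc 0 1)) (hU : MonoWave f τ U c)
    (hc : 0 ≤ c) (hA : ∀ z ≤ A, ρ₀ < U z) {ν : EuclideanSpace ℝ (Fin N)} (hν : ‖ν‖ = 1)
    (hφ : ∀ θ ∈ Icc (-τ) 0, ∀ y, φ θ y ≤ ρ₀)
    (hφ_out : ∀ θ ∈ Icc (-τ) 0, ∀ y, L < inner ℝ ν y → φ θ y ≤ 0) :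
    ∀ t ≥ -(ε * τ), ∀ y, u t y ≤ U ((inner ℝ ν y - L - c * t) / ε - c * τ + A) := by
  have hshift (t : ℝ) (y : EuclideanSpace ℝ (Fin N)) :
      planarWave U ν (L + ε * (c * τ - A)) c ε t y
        = U ((inner ℝ ν y - L - c * t) / ε - c * τ + A) := by
    simp only [planarWave]
    congr 1
    field_simp
    ring
  obtain ⟨-, -, hinit, -, -⟩ := id hu
  obtain ⟨-, hUrange, -⟩ := id hU
  intro t ht y
  rw [← hshift]
  refine hu.le_of_le_initial (planarWave_isRDSupersolution hU hε hν _) hε hτ hf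
    (fun θ hθ y => ?_) t ht y
  have hθε : θ / ε ∈ Icc (-τ) 0 :=
    ⟨by rw [le_div_iff₀ hε]; linarith [hθ.1], div_nonpos_of_nonpos_of_nonneg hθ.2 hε.le⟩
  rw [hinit θ hθ y, hshift]
  rcases le_or_gt (inner ℝ ν y) L with hy | hy
  · refine (hφ _ hθε y).trans (hA _ ?_).le
    have : (inner ℝ ν y - L - c * θ) / ε ≤ c * τ := by
      rw [div_le_iff₀ hε]
      nlinarith [hθ.1]
    linarith
  · exact (hφ_out _ hθε y hy).trans (hUrange _).1

theorem stmt_19_general {N : ℕ} (τ : ℝ) (hτ : 0 < τ)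
    (f : ℝ → ℝ) (hf : Monostable f)
    (cstar : ℝ) (hcstar : 0 < cstar)
    (hchar : ∀ c > (0:ℝ), (∃ U, MonoWave f τ U c) ↔ cstar ≤ c)
    (φ : ℝ → EuclideanSpace ℝ (Fin N) → ℝ)
    (w0 : EuclideanSpace ℝ (Fin N) → ℝ)
    (hΩbdd : Bornology.IsBounded {x : EuclideanSpace ℝ (Fin N) | 0 < w0 x})
    (hΩconv : Convex ℝ {x : EuclideanSpace ℝ (Fin N) | 0 < w0 x})
    (v0 : EuclideanSpace ℝ (Fin N) → ℝ) (hv0uc : UniformContinuous v0)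
    (hv0r : ∀ x, v0 x ∈ Ico (0:ℝ) 1)
    (hv0supp : closure (Function.support v0)
      = closure {x : EuclideanSpace ℝ (Fin N) | 0 < w0 x})
    (hφv0 : ∀ θ ∈ Icc (-τ) 0, ∀ x, φ θ x ≤ v0 x) :
    ∀ c > cstar, ∀ t₀ > (0:ℝ), ∀ ρ > (0:ℝ), ∃ ε₀ ∈ Ioo (0:ℝ) 1,
      ∀ ε ∈ Ioo (0:ℝ) ε₀, ∀ u, IsRDSol f τ ε φ u → ∀ t ≥ t₀,
      ∀ x : EuclideanSpace ℝ (Fin N),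
        x ∉ ({y : EuclideanSpace ℝ (Fin N) | 0 < w0 y}
          ∪ {x : EuclideanSpace ℝ (Fin N) |
              infDist x {y : EuclideanSpace ℝ (Fin N) | 0 < w0 y} < c * t}) →
        u t x ≤ ρ := by
  intro c hc t₀ ht₀ ρ hρ
  set Ω := {y : EuclideanSpace ℝ (Fin N) | 0 < w0 y}
  have hv0_out : ∀ y ∉ closure Ω, v0 y = 0 := fun y hy => by
    by_contra h
    exact hy (hv0supp ▸ subset_closure h)
  obtain ⟨ymax, hymax⟩ := hv0uc.continuous.exists_forall_ge_of_hasCompactSupport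
    (show IsCompact (closure (Function.support v0)) from hv0supp ▸ hΩbdd.isCompact_closure)
  obtain ⟨U, hU⟩ := (hchar cstar hcstar).2 le_rfl
  obtain ⟨-, -, -, hUbot, hUtop⟩ := id hU
  obtain ⟨A, hA⟩ := eventually_atBot.1 (hUbot.eventually (eventually_gt_nhds (hv0r ymax).2))
  obtain ⟨B, hB⟩ := eventually_atTop.1 (hUtop.eventually (eventually_lt_nhds hρ))
  set D := max (B + cstar * τ - A) 1
  have hD : 0 < D := lt_max_of_lt_right one_pos
  have hgap : 0 < (c - cstar) * t₀ := mul_pos (sub_pos.2 hc) ht₀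
  refine ⟨min (1 / 2) ((c - cstar) * t₀ / D),
    ⟨lt_min (by norm_num) (div_pos hgap hD), (min_le_left _ _).trans_lt (by norm_num)⟩, ?_⟩
  rintro ε ⟨hε, hεD⟩ u hu t ht x hx
  have hfar : c * t ≤ infDist x Ω := not_lt.1 (not_or.1 hx).2
  obtain ⟨ν, hν, hsep⟩ := hΩconv.exists_inner_add_infDist_le (x := x) (by nlinarith)
  have hbound := hu.le_wave_of_halfSpace hε hτ hf.monotoneOn hU hcstar.le hA hν
    (L := inner ℝ ν x - infDist x Ω) (fun θ hθ y => (hφv0 θ hθ y).trans (hymax y))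
    (fun θ hθ y hy => (hφv0 θ hθ y).trans
      (hv0_out y fun hyΩ => by linarith [hsep y hyΩ]).le) t (by nlinarith) x
  refine hbound.trans (hB _ ?_).le
  have hεD' : ε * D < (c - cstar) * t₀ := by
    have := hεD.trans_le (min_le_right _ _)
    rwa [lt_div_iff₀ hD] at this
  have : B + cstar * τ - A ≤ (infDist x Ω - cstar * t) / ε := by
    rw [le_div_iff₀ hε]
    nlinarith [mul_le_mul_of_nonneg_left (le_max_left (B + cstar * τ - A) 1) hε.le,
      mul_le_mul_of_nonneg_left ht (sub_pos.2 hc).le]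
  rw [show inner ℝ ν x - (inner ℝ ν x - infDist x Ω) - cstar * t = infDist x Ω - cstar * t by ring]
  linarith

/-- Convergence to a propagating interface, part (ii): outside the interface
moving with any normal speed `c > c*`, the solution of the scaled delayed
reaction–diffusion equation converges to `0` uniformly for `t ≥ t₀`. -/
theorem stmt_19 {N : ℕ} (hN : 1 ≤ N) (τ : ℝ) (hτ : 0 < τ)
    (f : ℝ → ℝ) (hf : Monostable f)
    (cstar : ℝ) (hcstar : 0 < cstar)
    (hchar : ∀ c > (0:ℝ), (∃ U, MonoWave f τ U c) ↔ cstar ≤ c)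
    (φ : ℝ → EuclideanSpace ℝ (Fin N) → ℝ)
    (hφuc : UniformContinuousOn (fun p : ℝ × EuclideanSpace ℝ (Fin N) => φ p.1 p.2)
      (Icc (-τ) 0 ×ˢ univ))
    (hφr : ∀ θ ∈ Icc (-τ) 0, ∀ x, φ θ x ∈ Icc (0:ℝ) 1)
    (w0 : EuclideanSpace ℝ (Fin N) → ℝ) (hw0sm : ContDiff ℝ 2 w0)
    (hw0bdd : ∃ M, ∀ x, |w0 x| + ‖fderiv ℝ w0 x‖ + ‖iteratedFDeriv ℝ 2 w0 x‖ ≤ M)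
    (hw0uc1 : UniformContinuous fun x => fderiv ℝ w0 x)
    (hw0uc2 : UniformContinuous fun x => iteratedFDeriv ℝ 2 w0 x)
    (hΩne : {x : EuclideanSpace ℝ (Fin N) | 0 < w0 x}.Nonempty)
    (hΩbdd : Bornology.IsBounded {x : EuclideanSpace ℝ (Fin N) | 0 < w0 x})
    (hΩconv : Convex ℝ {x : EuclideanSpace ℝ (Fin N) | 0 < w0 x})
    (hw0φ : ∀ θ ∈ Icc (-τ) 0, ∀ x, w0 x ≤ φ θ x)
    (δ : ℝ) (hδ : 0 < δ)
    (hgrad : ∀ x ∈ frontier {x : EuclideanSpace ℝ (Fin N) | 0 < w0 x},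
      δ ≤ ‖gradient w0 x‖)
    (v0 : EuclideanSpace ℝ (Fin N) → ℝ) (hv0uc : UniformContinuous v0)
    (hv0r : ∀ x, v0 x ∈ Ico (0:ℝ) 1)
    (hv0supp : closure (Function.support v0)
      = closure {x : EuclideanSpace ℝ (Fin N) | 0 < w0 x})
    (hφv0 : ∀ θ ∈ Icc (-τ) 0, ∀ x, φ θ x ≤ v0 x) :
    ∀ c > cstar, ∀ t₀ > (0:ℝ), ∀ ρ > (0:ℝ), ∃ ε₀ ∈ Ioo (0:ℝ) 1,
      ∀ ε ∈ Ioo (0:ℝ) ε₀, ∀ u, IsRDSol f τ ε φ u → ∀ t ≥ t₀,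
      ∀ x : EuclideanSpace ℝ (Fin N),
        x ∉ ({y : EuclideanSpace ℝ (Fin N) | 0 < w0 y}
          ∪ {x : EuclideanSpace ℝ (Fin N) |
              infDist x {y : EuclideanSpace ℝ (Fin N) | 0 < w0 y} < c * t}) →
        u t x ≤ ρ :=
  stmt_19_general τ hτ f hf cstar hcstar hchar φ w0 hΩbdd hΩconv v0 hv0uc hv0r hv0supp hφv0
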